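/- arXiv:2603.02975 — 2 statements merged into one kernel-verified Lean document; each statement's English description precedes it below -/
import Mathlib

section
/- Let ω_b, R, L > 0, let ω : [0,∞) → ℝ be Lebesgue measurable, and let v_{c,d}, v_{c,q}, v_{g,d}, v_{g,q} : [0,∞) → ℝ be Lebesgue measurable and essentially bounded. Suppose (i_{g,d}, i_{g,q}) : [0,∞) → ℝ² is locally absolutely continuous and satisfies, for almost every t ≥ 0: i̇_{g,d} = ω_b·ω·i_{g,q} + (ω_b/L)(v_{c,d} − v_{g,d}) − (ω_b R/L)·i_{g,d} and i̇_{g,q} = −ω_b·ω·i_{g,d} + (ω_b/L)(v_{c,q} − v_{g,q}) − (ω_b R/L)·i_{g,q}. Then for all t ≥ 0: i_{g,d}(t)² + i_{g,q}(t)² ≤ e^{−(ω_b R/L)t}·(i_{g,d}(0)² + i_{g,q}(0)²) + (2/R²)·(‖v_{c,d}‖∞² + ‖v_{c,q}‖∞² + ‖v_{g,d}‖∞² + ‖v_{g,q}‖∞²). -/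
open MeasureTheory

private lemma young_aux (lam c x w : ℝ) (hlam : 0 < lam) :
    2 * c * (x * w) ≤ lam * x ^ 2 + (c ^ 2 / lam) * w ^ 2 := by
  have h := sq_nonneg (lam * x - c * w)
  have h2 : (c ^ 2 / lam) * lam = c ^ 2 := div_mul_cancel₀ _ hlam.ne'
  nlinarith [h, h2, sq_nonneg w, hlam]

private lemma fubini_primitive (f g : ℝ → ℝ) (t : ℝ) (ht : 0 ≤ t)
    (hf : IntervalIntegrable f volume 0 t) (hg : IntervalIntegrable g volume 0 t) :
    (∫ s in (0:ℝ)..t, f s) * (∫ s in (0:ℝ)..t, g s)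
      = (∫ s in (0:ℝ)..t, (∫ r in (0:ℝ)..s, f r) * g s)
        + (∫ s in (0:ℝ)..t, (∫ r in (0:ℝ)..s, g r) * f s) := by
  set μ := volume.restrict (Set.Ioc (0:ℝ) t) with hμdef
  have hf' : Integrable f μ := hf.1
  have hg' : Integrable g μ := hg.1
  have hprod : Integrable (fun p : ℝ × ℝ => f p.1 * g p.2) (μ.prod μ) :=
    hf'.mul_prod hg'
  have hS : MeasurableSet {p : ℝ × ℝ | p.1 ≤ p.2} :=
    measurableSet_le measurable_fst measurable_snd
  set S : Set (ℝ × ℝ) := {p : ℝ × ℝ | p.1 ≤ p.2} with hSdef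
  have hH : Integrable (S.indicator fun p : ℝ × ℝ => f p.1 * g p.2) (μ.prod μ) :=
    hprod.indicator hS
  have hH' : Integrable (Sᶜ.indicator fun p : ℝ × ℝ => f p.1 * g p.2) (μ.prod μ) :=
    hprod.indicator hS.compl
  -- value of the upper-triangle integral
  have hHval : (∫ p, S.indicator (fun p : ℝ × ℝ => f p.1 * g p.2) p ∂(μ.prod μ))
      = ∫ s in (0:ℝ)..t, (∫ r in (0:ℝ)..s, f r) * g s := by
    have h1 : (∫ p, S.indicator (fun p : ℝ × ℝ => f p.1 * g p.2) p ∂(μ.prod μ))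
        = ∫ s, (∫ r, S.indicator (fun p : ℝ × ℝ => f p.1 * g p.2) (r, s) ∂μ) ∂μ := by
      rw [← MeasureTheory.integral_integral_swap (f := fun r s =>
        S.indicator (fun p : ℝ × ℝ => f p.1 * g p.2) (r, s)) hH]
      exact (MeasureTheory.integral_integral (f := fun r s =>
        S.indicator (fun p : ℝ × ℝ => f p.1 * g p.2) (r, s)) hH).symm
    rw [h1, intervalIntegral.integral_of_le ht]
    refine integral_congr_ae ?_
    filter_upwards [ae_restrict_mem measurableSet_Ioc] with s hs
    have inner : ∀ r : ℝ, S.indicator (fun p : ℝ × ℝ => f p.1 * g p.2) (r, s)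
        = (Set.Iic s).indicator f r * g s := by
      intro r
      by_cases h : r ≤ s <;> simp [hSdef, Set.indicator, h]
    have hset : Set.Iic s ∩ Set.Ioc 0 t = Set.Ioc 0 s := by
      ext x
      simp only [Set.mem_inter_iff, Set.mem_Iic, Set.mem_Ioc]
      constructor
      · rintro ⟨h1, h2, _⟩; exact ⟨h2, h1⟩
      · rintro ⟨h1, h2⟩; exact ⟨h2, h1, h2.trans hs.2⟩
    calc ∫ r, S.indicator (fun p : ℝ × ℝ => f p.1 * g p.2) (r, s) ∂μ
        = ∫ r, (Set.Iic s).indicator f r * g s ∂μ := by simp_rw [inner]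
      _ = (∫ r, (Set.Iic s).indicator f r ∂μ) * g s := integral_mul_const _ _
      _ = (∫ r in (0:ℝ)..s, f r) * g s := by
          congr 1
          rw [integral_indicator measurableSet_Iic, hμdef,
            Measure.restrict_restrict measurableSet_Iic, hset,
            intervalIntegral.integral_of_le hs.1.le]
  -- value of the lower-triangle integral
  have hH'val : (∫ p, Sᶜ.indicator (fun p : ℝ × ℝ => f p.1 * g p.2) p ∂(μ.prod μ))
      = ∫ s in (0:ℝ)..t, (∫ r in (0:ℝ)..s, g r) * f s := by
    have h1 : (∫ p, Sᶜ.indicator (fun p : ℝ × ℝ => f p.1 * g p.2) p ∂(μ.prod μ))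
        = ∫ r, (∫ s, Sᶜ.indicator (fun p : ℝ × ℝ => f p.1 * g p.2) (r, s) ∂μ) ∂μ :=
      (MeasureTheory.integral_integral (f := fun r s =>
        Sᶜ.indicator (fun p : ℝ × ℝ => f p.1 * g p.2) (r, s)) hH').symm
    rw [h1, intervalIntegral.integral_of_le ht]
    refine integral_congr_ae ?_
    filter_upwards [ae_restrict_mem measurableSet_Ioc] with r hr
    have inner : ∀ s : ℝ, Sᶜ.indicator (fun p : ℝ × ℝ => f p.1 * g p.2) (r, s)
        = f r * (Set.Iio r).indicator g s := by
      intro s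
      by_cases h : r ≤ s
      · simp [hSdef, Set.indicator, h, not_lt.mpr h]
      · simp [hSdef, Set.indicator, h, not_le.mp h]
    have hset : Set.Iio r ∩ Set.Ioc 0 t = Set.Ioo 0 r := by
      ext x
      simp only [Set.mem_inter_iff, Set.mem_Iio, Set.mem_Ioc, Set.mem_Ioo]
      constructor
      · rintro ⟨h1, h2, _⟩; exact ⟨h2, h1⟩
      · rintro ⟨h1, h2⟩; exact ⟨h2, h1, (h2.le.trans hr.2)⟩
    calc ∫ s, Sᶜ.indicator (fun p : ℝ × ℝ => f p.1 * g p.2) (r, s) ∂μ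
        = ∫ s, f r * (Set.Iio r).indicator g s ∂μ := by simp_rw [inner]
      _ = f r * (∫ s, (Set.Iio r).indicator g s ∂μ) := integral_const_mul _ _
      _ = (∫ s in (0:ℝ)..r, g s) * f r := by
          rw [mul_comm]
          congr 1
          rw [integral_indicator measurableSet_Iio, hμdef,
            Measure.restrict_restrict measurableSet_Iio, hset,
            intervalIntegral.integral_of_le hr.1.le, integral_Ioc_eq_integral_Ioo]
  have hsplit : (∫ p : ℝ × ℝ, f p.1 * g p.2 ∂(μ.prod μ))
      = (∫ p, S.indicator (fun p : ℝ × ℝ => f p.1 * g p.2) p ∂(μ.prod μ))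
        + ∫ p, Sᶜ.indicator (fun p : ℝ × ℝ => f p.1 * g p.2) p ∂(μ.prod μ) := by
    rw [← integral_add hH hH']
    refine integral_congr_ae (Filter.Eventually.of_forall fun p => ?_)
    exact (congrFun (Set.indicator_self_add_compl S fun p : ℝ × ℝ => f p.1 * g p.2) p).symm
  calc (∫ s in (0:ℝ)..t, f s) * (∫ s in (0:ℝ)..t, g s)
      = (∫ s, f s ∂μ) * (∫ s, g s ∂μ) := by
        rw [intervalIntegral.integral_of_le ht, intervalIntegral.integral_of_le ht]
    _ = ∫ p : ℝ × ℝ, f p.1 * g p.2 ∂(μ.prod μ) := (integral_prod_mul f g).symm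
    _ = _ := by rw [hsplit, hHval, hH'val]

private lemma primitive_mul (f g : ℝ → ℝ) (a b t : ℝ) (ht : 0 ≤ t)
    (hf : IntervalIntegrable f volume 0 t) (hg : IntervalIntegrable g volume 0 t) :
    (a + ∫ s in (0:ℝ)..t, f s) * (b + ∫ s in (0:ℝ)..t, g s)
      = a * b + ∫ s in (0:ℝ)..t,
          ((a + ∫ r in (0:ℝ)..s, f r) * g s + (b + ∫ r in (0:ℝ)..s, g r) * f s) := by
  have hFc : ContinuousOn (fun s => ∫ r in (0:ℝ)..s, f r) (Set.uIcc 0 t) :=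
    intervalIntegral.continuousOn_primitive_interval' hf Set.left_mem_uIcc
  have hGc : ContinuousOn (fun s => ∫ r in (0:ℝ)..s, g r) (Set.uIcc 0 t) :=
    intervalIntegral.continuousOn_primitive_interval' hg Set.left_mem_uIcc
  have i1 : IntervalIntegrable (fun s => (∫ r in (0:ℝ)..s, f r) * g s) volume 0 t :=
    hg.continuousOn_mul hFc
  have i2 : IntervalIntegrable (fun s => (∫ r in (0:ℝ)..s, g r) * f s) volume 0 t :=
    hf.continuousOn_mul hGc
  have i3 : IntervalIntegrable (fun s => a * g s) volume 0 t := hg.const_mul a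
  have i4 : IntervalIntegrable (fun s => b * f s) volume 0 t := hf.const_mul b
  have expand : (fun s => (a + ∫ r in (0:ℝ)..s, f r) * g s
        + (b + ∫ r in (0:ℝ)..s, g r) * f s)
      = fun s => (a * g s + b * f s)
        + ((∫ r in (0:ℝ)..s, f r) * g s + (∫ r in (0:ℝ)..s, g r) * f s) := by
    funext s; ring
  rw [expand, intervalIntegral.integral_add ((i3.add i4)) (i1.add i2),
    intervalIntegral.integral_add i3 i4, intervalIntegral.integral_add i1 i2,
    intervalIntegral.integral_const_mul, intervalIntegral.integral_const_mul,
    ← fubini_primitive f g t ht hf hg]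
  ring
set_option maxHeartbeats 1000000 in
/-- Energy bound on the grid current of an inverter
connected through a series R–L line in a rotating dq frame: for a locally
absolutely continuous solution (i_{g,d}, i_{g,q}) of the grid-current
dynamics (encoded by the integral identities plus local integrability), a
measurable frequency ω and measurable essentially bounded voltages, the
squared current norm satisfies an exponential decay plus (2/R²)·(sum of the
squared essential bounds) estimate. -/
theorem stmt18
    (ωb R L : ℝ) (hωb : 0 < ωb) (hR : 0 < R) (hL : 0 < L)
    (ω vcd vcq vgd vgq igd igq : ℝ → ℝ)
    (Vcd Vcq Vgd Vgq : ℝ)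
    (hω_meas : Measurable ω)
    (hvcd_meas : Measurable vcd) (hvcq_meas : Measurable vcq)
    (hvgd_meas : Measurable vgd) (hvgq_meas : Measurable vgq)
    (hvcd_bdd : ∀ᵐ t ∂volume, 0 ≤ t → |vcd t| ≤ Vcd)
    (hvcq_bdd : ∀ᵐ t ∂volume, 0 ≤ t → |vcq t| ≤ Vcq)
    (hvgd_bdd : ∀ᵐ t ∂volume, 0 ≤ t → |vgd t| ≤ Vgd)
    (hvgq_bdd : ∀ᵐ t ∂volume, 0 ≤ t → |vgq t| ≤ Vgq)
    (hd_int : ∀ t, 0 ≤ t → IntervalIntegrable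
      (fun s => ωb * ω s * igq s + (ωb / L) * (vcd s - vgd s) - (ωb * R / L) * igd s)
      volume 0 t)
    (hq_int : ∀ t, 0 ≤ t → IntervalIntegrable
      (fun s => -(ωb * ω s) * igd s + (ωb / L) * (vcq s - vgq s) - (ωb * R / L) * igq s)
      volume 0 t)
    (hd_rep : ∀ t, 0 ≤ t → igd t = igd 0 + ∫ s in (0:ℝ)..t,
      (ωb * ω s * igq s + (ωb / L) * (vcd s - vgd s) - (ωb * R / L) * igd s))
    (hq_rep : ∀ t, 0 ≤ t → igq t = igq 0 + ∫ s in (0:ℝ)..t,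
      (-(ωb * ω s) * igd s + (ωb / L) * (vcq s - vgq s) - (ωb * R / L) * igq s)) :
    ∀ t, 0 ≤ t →
      (igd t)^2 + (igq t)^2
        ≤ Real.exp (-(ωb * R / L) * t) * ((igd 0)^2 + (igq 0)^2)
          + (2 / R^2) * (Vcd^2 + Vcq^2 + Vgd^2 + Vgq^2) := by
  intro t ht
  set lam : ℝ := ωb * R / L with hlam_def
  have hlam : 0 < lam := by rw [hlam_def]; positivity
  set fd : ℝ → ℝ := fun s =>
    ωb * ω s * igq s + ωb / L * (vcd s - vgd s) - lam * igd s with hfd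
  set fq : ℝ → ℝ := fun s =>
    -(ωb * ω s) * igd s + ωb / L * (vcq s - vgq s) - lam * igq s with hfq
  -- continuity of the currents on nonnegative intervals
  have hcont_d : ∀ u, 0 ≤ u → ContinuousOn igd (Set.uIcc 0 u) := by
    intro u hu
    have h1 : ContinuousOn (fun x => igd 0 + ∫ s in (0:ℝ)..x, fd s) (Set.uIcc 0 u) :=
      continuousOn_const.add
        (intervalIntegral.continuousOn_primitive_interval' (hd_int u hu) Set.left_mem_uIcc)
    refine h1.congr fun x hx => ?_
    rw [Set.uIcc_of_le hu] at hx
    exact hd_rep x hx.1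
  have hcont_q : ∀ u, 0 ≤ u → ContinuousOn igq (Set.uIcc 0 u) := by
    intro u hu
    have h1 : ContinuousOn (fun x => igq 0 + ∫ s in (0:ℝ)..x, fq s) (Set.uIcc 0 u) :=
      continuousOn_const.add
        (intervalIntegral.continuousOn_primitive_interval' (hq_int u hu) Set.left_mem_uIcc)
    refine h1.congr fun x hx => ?_
    rw [Set.uIcc_of_le hu] at hx
    exact hq_rep x hx.1
  set G : ℝ → ℝ := fun s => 2 * (igd s * fd s) + 2 * (igq s * fq s) with hG
  have hGd_int : ∀ u, 0 ≤ u →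
      IntervalIntegrable (fun s => 2 * (igd s * fd s)) volume 0 u := by
    intro u hu
    have := ((hd_int u hu).continuousOn_mul (hcont_d u hu)).const_mul 2
    simpa using this
  have hGq_int : ∀ u, 0 ≤ u →
      IntervalIntegrable (fun s => 2 * (igq s * fq s)) volume 0 u := by
    intro u hu
    have := ((hq_int u hu).continuousOn_mul (hcont_q u hu)).const_mul 2
    simpa using this
  have hG_int : ∀ u, 0 ≤ u → IntervalIntegrable G volume 0 u := by
    intro u hu
    exact (hGd_int u hu).add (hGq_int u hu)
  -- energy representation
  have hd_sq : ∀ u, 0 ≤ u → igd u * igd u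
      = igd 0 * igd 0 + ∫ s in (0:ℝ)..u, 2 * (igd s * fd s) := by
    intro u hu
    have h := primitive_mul fd fd (igd 0) (igd 0) u hu (hd_int u hu) (hd_int u hu)
    rw [← hd_rep u hu] at h
    rw [h]
    congr 1
    refine intervalIntegral.integral_congr fun s hs => ?_
    rw [Set.uIcc_of_le hu] at hs
    rw [← hd_rep s hs.1]; ring
  have hq_sq : ∀ u, 0 ≤ u → igq u * igq u
      = igq 0 * igq 0 + ∫ s in (0:ℝ)..u, 2 * (igq s * fq s) := by
    intro u hu
    have h := primitive_mul fq fq (igq 0) (igq 0) u hu (hq_int u hu) (hq_int u hu)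
    rw [← hq_rep u hu] at h
    rw [h]
    congr 1
    refine intervalIntegral.integral_congr fun s hs => ?_
    rw [Set.uIcc_of_le hu] at hs
    rw [← hq_rep s hs.1]; ring
  have hV_rep : ∀ u, 0 ≤ u → igd u ^ 2 + igq u ^ 2
      = (igd 0 ^ 2 + igq 0 ^ 2) + ∫ s in (0:ℝ)..u, G s := by
    intro u hu
    have h := intervalIntegral.integral_add (hGd_int u hu) (hGq_int u hu)
    have hd := hd_sq u hu
    have hq := hq_sq u hu
    have : igd u * igd u + igq u * igq u
        = (igd 0 * igd 0 + igq 0 * igq 0) + ∫ s in (0:ℝ)..u, G s := by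
      rw [hG]
      rw [h, hd, hq]; ring
    nlinarith [this]
  -- exponential representation
  have hexp_cont : Continuous fun s : ℝ => Real.exp (lam * s) * lam :=
    ((Real.continuous_exp.comp (continuous_const.mul continuous_id)).mul continuous_const)
  have hexp_int : ∀ u : ℝ, IntervalIntegrable (fun s => Real.exp (lam * s) * lam)
      volume 0 u := fun u => hexp_cont.intervalIntegrable 0 u
  have hexp_rep : ∀ u : ℝ, Real.exp (lam * u)
      = 1 + ∫ s in (0:ℝ)..u, Real.exp (lam * s) * lam := by
    intro u
    have hder : ∀ x ∈ Set.uIcc (0:ℝ) u, HasDerivAt (fun y => Real.exp (lam * y))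
        (Real.exp (lam * x) * lam) x := by
      intro x _
      have h1 : HasDerivAt (fun y : ℝ => lam * y) lam x := by
        simpa using (hasDerivAt_id x).const_mul lam
      simpa using h1.exp
    rw [intervalIntegral.integral_eq_sub_of_hasDerivAt hder (hexp_int u)]
    simp
  -- multiply energy by exponential
  set V0 : ℝ := igd 0 ^ 2 + igq 0 ^ 2 with hV0
  have hW := primitive_mul (fun s => Real.exp (lam * s) * lam) G 1 V0 t ht
    (hexp_int t) (hG_int t ht)
  rw [← hexp_rep t, ← hV_rep t ht, one_mul] at hW
  have hW2 : Real.exp (lam * t) * (igd t ^ 2 + igq t ^ 2)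
      = V0 + ∫ s in (0:ℝ)..t,
          (Real.exp (lam * s) * G s + (igd s ^ 2 + igq s ^ 2) * (Real.exp (lam * s) * lam)) := by
    rw [hW]
    congr 1
    refine intervalIntegral.integral_congr fun s hs => ?_
    rw [Set.uIcc_of_le ht] at hs
    rw [← hexp_rep s, ← hV_rep s hs.1]
  -- the constant
  set M : ℝ := (Vcd + Vgd) ^ 2 + (Vcq + Vgq) ^ 2 with hM
  set C : ℝ := ((ωb / L) ^ 2 / lam) * M with hC
  -- integrand bound
  have hint_left : IntervalIntegrable (fun s =>
      Real.exp (lam * s) * G s + (igd s ^ 2 + igq s ^ 2) * (Real.exp (lam * s) * lam))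
      volume 0 t := by
    have h1 : IntervalIntegrable (fun s => Real.exp (lam * s) * G s) volume 0 t :=
      (hG_int t ht).continuousOn_mul
        ((Real.continuous_exp.comp (continuous_const.mul continuous_id)).continuousOn)
    have h2 : ContinuousOn (fun s => (igd s ^ 2 + igq s ^ 2) * (Real.exp (lam * s) * lam))
        (Set.uIcc 0 t) :=
      (((hcont_d t ht).pow 2).add ((hcont_q t ht).pow 2)).mul hexp_cont.continuousOn
    exact h1.add (h2.intervalIntegrable)
  have hint_right : IntervalIntegrable (fun s => (C / lam) * (Real.exp (lam * s) * lam))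
      volume 0 t := (hexp_int t).const_mul _
  have hbound : (∫ s in (0:ℝ)..t,
        (Real.exp (lam * s) * G s + (igd s ^ 2 + igq s ^ 2) * (Real.exp (lam * s) * lam)))
      ≤ ∫ s in (0:ℝ)..t, (C / lam) * (Real.exp (lam * s) * lam) := by
    refine intervalIntegral.integral_mono_ae_restrict ht hint_left hint_right ?_
    filter_upwards [ae_restrict_of_ae hvcd_bdd, ae_restrict_of_ae hvcq_bdd,
      ae_restrict_of_ae hvgd_bdd, ae_restrict_of_ae hvgq_bdd,
      ae_restrict_mem measurableSet_Icc] with s h1 h2 h3 h4 hs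
    have hs0 : (0:ℝ) ≤ s := hs.1
    obtain ⟨h1a, h1b⟩ := abs_le.mp (h1 hs0)
    obtain ⟨h2a, h2b⟩ := abs_le.mp (h2 hs0)
    obtain ⟨h3a, h3b⟩ := abs_le.mp (h3 hs0)
    obtain ⟨h4a, h4b⟩ := abs_le.mp (h4 hs0)
    have hwd : (vcd s - vgd s) ^ 2 ≤ (Vcd + Vgd) ^ 2 :=
      sq_le_sq' (by linarith) (by linarith)
    have hwq : (vcq s - vgq s) ^ 2 ≤ (Vcq + Vgq) ^ 2 :=
      sq_le_sq' (by linarith) (by linarith)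
    have hy1 := young_aux lam (ωb / L) (igd s) (vcd s - vgd s) hlam
    have hy2 := young_aux lam (ωb / L) (igq s) (vcq s - vgq s) hlam
    have hKpos : 0 ≤ (ωb / L) ^ 2 / lam := by positivity
    have key : G s + lam * (igd s ^ 2 + igq s ^ 2) ≤ C := by
      have hGs : G s + lam * (igd s ^ 2 + igq s ^ 2)
          = -(lam * (igd s ^ 2 + igq s ^ 2))
            + (2 * (ωb / L) * (igd s * (vcd s - vgd s))
              + 2 * (ωb / L) * (igq s * (vcq s - vgq s))) := by
        rw [hG, hfd, hfq]; ring
      rw [hGs, hC, hM]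
      linarith [hy1, hy2, mul_le_mul_of_nonneg_left hwd hKpos,
        mul_le_mul_of_nonneg_left hwq hKpos]
    have hepos : (0:ℝ) < Real.exp (lam * s) := Real.exp_pos _
    have hrhs : C / lam * (Real.exp (lam * s) * lam) = Real.exp (lam * s) * C := by
      field_simp
    clear_value lam fd fq G M C
    linarith [mul_le_mul_of_nonneg_left key hepos.le, hrhs]
  -- integrate the bound
  have hint_exp : (∫ s in (0:ℝ)..t, (C / lam) * (Real.exp (lam * s) * lam))
      = (C / lam) * (Real.exp (lam * t) - 1) := by
    rw [intervalIntegral.integral_const_mul]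
    congr 1
    have := hexp_rep t
    linarith
  have hstep : Real.exp (lam * t) * (igd t ^ 2 + igq t ^ 2)
      ≤ V0 + (C / lam) * Real.exp (lam * t) := by
    rw [hW2]
    have hCl : 0 ≤ C / lam := by
      have : (0:ℝ) ≤ M := by rw [hM]; positivity
      have : (0:ℝ) ≤ C := by rw [hC]; positivity
      positivity
    calc V0 + _ ≤ V0 + (C / lam) * (Real.exp (lam * t) - 1) := by
          rw [← hint_exp]; exact add_le_add le_rfl hbound
      _ ≤ V0 + (C / lam) * Real.exp (lam * t) := by nlinarith [hCl]
  -- divide by the exponential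
  have hmul : Real.exp (-(lam * t)) * Real.exp (lam * t) = 1 := by
    rw [← Real.exp_add]; simp
  have hfinal : igd t ^ 2 + igq t ^ 2 ≤ Real.exp (-(lam * t)) * V0 + C / lam := by
    nlinarith [mul_le_mul_of_nonneg_left hstep (Real.exp_pos (-(lam * t))).le, hmul,
      (Real.exp_pos (-(lam * t))).le]
  -- constant comparison
  have hconst : C / lam ≤ 2 / R ^ 2 * (Vcd ^ 2 + Vcq ^ 2 + Vgd ^ 2 + Vgq ^ 2) := by
    have hcoef : (ωb / L) ^ 2 / lam / lam = 1 / R ^ 2 := by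
      rw [hlam_def]
      field_simp
    have hCl : C / lam = (1 / R ^ 2) * M := by
      have hre : (ωb / L) ^ 2 / lam * M / lam = ((ωb / L) ^ 2 / lam / lam) * M := by ring
      rw [hC, hre, hcoef]
    rw [hCl]
    have hMle : M ≤ 2 * (Vcd ^ 2 + Vcq ^ 2 + Vgd ^ 2 + Vgq ^ 2) := by
      rw [hM]
      nlinarith [sq_nonneg (Vcd - Vgd), sq_nonneg (Vcq - Vgq)]
    have hR2 : (0:ℝ) ≤ 1 / R ^ 2 := by positivity
    calc (1 / R ^ 2) * M ≤ (1 / R ^ 2) * (2 * (Vcd ^ 2 + Vcq ^ 2 + Vgd ^ 2 + Vgq ^ 2)) :=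
          mul_le_mul_of_nonneg_left hMle hR2
      _ = 2 / R ^ 2 * (Vcd ^ 2 + Vcq ^ 2 + Vgd ^ 2 + Vgq ^ 2) := by ring
  have hexp_eq : Real.exp (-(ωb * R / L) * t) = Real.exp (-(lam * t)) := by
    rw [hlam_def]; ring_nf
  rw [hexp_eq]
  have hV0 : Real.exp (-(lam * t)) * ((igd 0)^2 + (igq 0)^2) = Real.exp (-(lam * t)) * V0 := by
    rw [hV0]
  linarith [hfinal, hconst]
end

section
/- Let z : [0,∞) → ℝ be locally absolutely continuous and nondecreasing, let Δ ≥ 0 and N ∈ ℕ, and let I_off ⊆ [0,∞) be a union I_off = ⋃_{κ=0}^{M−1} [s_κ, t_κ] ∪ [s_M, ∞) of M + 1 ≤ N + 1 disjoint closed intervals with 0 ≤ s₀ ≤ t₀ ≤ s₁ ≤ t₁ ≤ ⋯ ≤ s_M < ∞, and set I_on = [0,∞) \ I_off. Assume: (i) ∫_{I_on} ż(s) ds ≤ Δ; (ii) Φ : ℝ → ℝ is nondecreasing and satisfies Φ(ζ) ≥ ζ for all ζ ∈ ℝ; (iii) for each interval of I_off with left endpoint s, one has z(t) ≤ Φ(z(s))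 for every t in that interval. Define Ψ(ζ) = Φ(ζ) + Δ. Then z(t) ≤ Φ(Ψ^{(N+1)}(z(0))) for all t ≥ 0, where Ψ^{(N+1)} denotes the (N+1)-fold composition of Ψ with itself. -/
open MeasureTheory

private lemma aux_ae_nonneg (z z' : ℝ → ℝ)
    (hz_mono : MonotoneOn z (Set.Ici 0))
    (hz_int : ∀ a, 0 ≤ a → IntervalIntegrable z' volume 0 a)
    (hz_rep : ∀ a, 0 ≤ a → z a = z 0 + ∫ σ in (0:ℝ)..a, z' σ) :
    ∀ᵐ x : ℝ, x ∈ Set.Ioi (0:ℝ) → 0 ≤ z' x := by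
  set g : ℝ → ℝ := Set.indicator (Set.Ici (0:ℝ)) z' with hg
  have hgloc : LocallyIntegrable g volume := by
    rw [locallyIntegrable_iff]
    intro K hK
    obtain ⟨R0, hR0'⟩ := hK.isBounded.subset_closedBall 0
    set R : ℝ := max R0 0 with hRdef
    have hR : K ⊆ Metric.closedBall 0 R :=
      hR0'.trans (Metric.closedBall_subset_closedBall (le_max_left _ _))
    have hR0 : (0:ℝ) ≤ R := le_max_right _ _
    have hint : IntegrableOn z' (Set.Icc 0 R) volume :=
      (intervalIntegrable_iff_integrableOn_Icc_of_le hR0).mp (hz_int R hR0)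
    have : IntegrableOn g (Set.Icc (-R) R) volume := by
      rw [hg, IntegrableOn, integrable_indicator_iff measurableSet_Ici,
        IntegrableOn, Measure.restrict_restrict measurableSet_Ici]
      have hsub : Set.Ici (0:ℝ) ∩ Set.Icc (-R) R ⊆ Set.Icc 0 R := by
        rintro x ⟨h1, h2, h3⟩; exact ⟨h1, h3⟩
      exact (hint.mono_set hsub)
    refine this.mono_set ?_
    intro x hx
    have := hR hx
    simp only [Metric.mem_closedBall, Real.dist_eq, sub_zero] at this
    exact abs_le.mp this
  have hae := IsUnifLocDoublingMeasure.ae_tendsto_average (μ := (volume : Measure ℝ))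
    hgloc 1
  filter_upwards [hae] with x hx hx0
  have hx0' : (0:ℝ) < x := hx0
  have htend : Filter.Tendsto (fun δ : ℝ => ⨍ y in Metric.closedBall x δ, g y)
      (nhdsWithin 0 (Set.Ioi 0)) (nhds (g x)) := by
    refine hx (fun _ => x) id Filter.tendsto_id ?_
    filter_upwards [self_mem_nhdsWithin] with δ hδ
    have : (0:ℝ) < δ := hδ
    simp [Metric.mem_closedBall, le_of_lt this]
  have hgx : g x = z' x := Set.indicator_of_mem (Set.mem_Ici.mpr hx0'.le) z'
  rw [hgx] at htend
  refine ge_of_tendsto htend ?_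
  filter_upwards [Ioo_mem_nhdsGT_of_mem (Set.mem_Ico.mpr ⟨le_refl 0, hx0'⟩)] with δ hδ
  obtain ⟨hδ0, hδx⟩ := hδ
  have h1 : (0:ℝ) ≤ x - δ := by linarith
  have h2 : x - δ ≤ x + δ := by linarith
  have h3 : (0:ℝ) ≤ x + δ := by linarith
  have hball : Metric.closedBall x δ = Set.Icc (x - δ) (x + δ) := Real.closedBall_eq_Icc
  have hIcc : ∫ y in Set.Icc (x - δ) (x + δ), g y = ∫ y in Set.Icc (x - δ) (x + δ), z' y := by
    refine setIntegral_congr_fun measurableSet_Icc ?_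
    intro y hy
    exact Set.indicator_of_mem (le_trans h1 hy.1) z'
  have hval : ∫ y in Set.Icc (x - δ) (x + δ), z' y = z (x + δ) - z (x - δ) := by
    rw [integral_Icc_eq_integral_Ioc, ← intervalIntegral.integral_of_le h2]
    have hsub : ∫ σ in (x - δ)..(x + δ), z' σ
        = (∫ σ in (0:ℝ)..(x + δ), z' σ) - ∫ σ in (0:ℝ)..(x - δ), z' σ :=
      (intervalIntegral.integral_interval_sub_left (hz_int _ h3) (hz_int _ h1)).symm
    rw [hsub, hz_rep _ h3, hz_rep _ h1]
    ring
  have hmono : z (x - δ) ≤ z (x + δ) := hz_mono h1 h3 h2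
  rw [setAverage_eq, hball, hIcc, hval]
  have : (0:ℝ) ≤ z (x + δ) - z (x - δ) := by linarith
  exact smul_nonneg (inv_nonneg.mpr ENNReal.toReal_nonneg) this


/-- Abstract switching lemma for the adaptive gain of a
safety-filtered DADS controller: z is locally absolutely continuous (encoded
by the integral identity with locally integrable a.e. derivative z') and
nondecreasing on [0,∞); the OFF set I_off is a union of M + 1 ≤ N + 1 closed
intervals (the last one unbounded), the ON set I_on = [0,∞) \ I_off carries
total gain increase at most Δ, and each OFF interval obeys the one-step bound
z(t) ≤ Φ(z(s)) from its left endpoint s, with Φ nondecreasing and dominating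
the identity. Then z(t) ≤ Φ(Ψ^{(N+1)}(z(0))) for all t ≥ 0, where
Ψ(ζ) = Φ(ζ) + Δ. -/
theorem stmt19
    (z z' : ℝ → ℝ) (Δ : ℝ) (hΔ : 0 ≤ Δ) (N M : ℕ) (hMN : M ≤ N)
    (s t : ℕ → ℝ) (hs0 : 0 ≤ s 0)
    (hst : ∀ κ, κ < M → s κ ≤ t κ) (hts : ∀ κ, κ < M → t κ ≤ s (κ + 1))
    (Φ : ℝ → ℝ) (hΦ_mono : Monotone Φ) (hΦ_id : ∀ ζ : ℝ, ζ ≤ Φ ζ)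
    (hz_mono : MonotoneOn z (Set.Ici 0))
    (hz'_meas : Measurable z')
    (hz_int : ∀ a, 0 ≤ a → IntervalIntegrable z' volume 0 a)
    (hz_rep : ∀ a, 0 ≤ a → z a = z 0 + ∫ σ in (0:ℝ)..a, z' σ)
    (Ioff Ion : Set ℝ)
    (hIoff : Ioff = (⋃ κ ∈ Finset.range M, Set.Icc (s κ) (t κ)) ∪ Set.Ici (s M))
    (hIon : Ion = Set.Ici (0:ℝ) \ Ioff)
    (hon : ∫ σ in Ion, z' σ ≤ Δ)
    (hoff₁ : ∀ κ, κ < M → ∀ a ∈ Set.Icc (s κ) (t κ), z a ≤ Φ (z (s κ)))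
    (hoff₂ : ∀ a ∈ Set.Ici (s M), z a ≤ Φ (z (s M))) :
    ∀ a, 0 ≤ a → z a ≤ Φ ((fun ζ => Φ ζ + Δ)^[N + 1] (z 0)) := by
  set Ψ : ℝ → ℝ := fun ζ => Φ ζ + Δ with hΨ
  have hstep : ∀ j, j < M → s j ≤ s (j + 1) := fun j hj => (hst j hj).trans (hts j hj)
  have hsmono : ∀ k, k ≤ M → ∀ j, j ≤ k → s j ≤ s k := by
    intro k
    induction k with
    | zero => intro _ j hj; rw [Nat.le_zero.mp hj]
    | succ n ih =>
      intro hn j hj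
      rcases Nat.lt_or_ge j (n + 1) with h | h
      · exact (ih (by omega) j (by omega)).trans (hstep n (by omega))
      · have hjn : j = n + 1 := by omega
        rw [hjn]
  have hs_nonneg : ∀ k, k ≤ M → 0 ≤ s k := fun k hk => hs0.trans (hsmono k hk 0 (Nat.zero_le _))
  have htmono : ∀ j k, j ≤ k → k < M → t j ≤ t k := by
    intro j k hjk hkM
    rcases Nat.lt_or_ge j k with h | h
    · exact (hts j (by omega)).trans ((hsmono k (le_of_lt hkM) (j+1) (by omega)).trans
        (hst k hkM))
    · have : j = k := le_antisymm hjk h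
      rw [this]
  -- a.e. nonnegativity of z' on [0, ∞)
  have hae : 0 ≤ᵐ[volume.restrict (Set.Ici (0:ℝ))] z' := by
    have h1 : 0 ≤ᵐ[volume.restrict (Set.Ioi (0:ℝ))] z' :=
      (ae_restrict_iff' measurableSet_Ioi).mpr (aux_ae_nonneg z z' hz_mono hz_int hz_rep)
    rwa [Measure.restrict_congr_set Ioi_ae_eq_Ici] at h1
  -- the ON set sits inside [0, s M]
  have hIon_sub : Ion ⊆ Set.Icc 0 (s M) := by
    intro x hx
    rw [hIon] at hx
    obtain ⟨hx0, hxoff⟩ := hx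
    rw [hIoff] at hxoff
    constructor
    · exact hx0
    · by_contra h
      exact hxoff (Or.inr (le_of_lt (not_le.mp h)))
  have hIon_int : IntegrableOn z' Ion volume :=
    ((intervalIntegrable_iff_integrableOn_Icc_of_le (hs_nonneg M le_rfl)).mp
      (hz_int _ (hs_nonneg M le_rfl))).mono_set hIon_sub
  have hae_Ion : 0 ≤ᵐ[volume.restrict Ion] z' :=
    ae_restrict_of_ae_restrict_of_subset (fun x hx => (hIon_sub hx).1) hae
  -- key estimate: across an ON gap, z increases by at most Δ
  have hkey : ∀ c d : ℝ, 0 ≤ c → c ≤ d → Set.Ioo c d ⊆ Ion → z d ≤ z c + Δ := by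
    intro c d hc hcd hsub
    have hd : 0 ≤ d := hc.trans hcd
    have h1 : z d - z c = ∫ σ in c..d, z' σ := by
      rw [hz_rep d hd, hz_rep c hc,
        ← intervalIntegral.integral_interval_sub_left (hz_int d hd) (hz_int c hc)]
      ring
    have h2 : ∫ σ in c..d, z' σ = ∫ σ in Set.Ioo c d, z' σ := by
      rw [intervalIntegral.integral_of_le hcd, integral_Ioc_eq_integral_Ioo]
    have h3 : ∫ σ in Set.Ioo c d, z' σ ≤ ∫ σ in Ion, z' σ :=
      setIntegral_mono_set hIon_int hae_Ion (HasSubset.Subset.eventuallyLE hsub)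
    linarith [hon]
  have hΨmono : Monotone Ψ := fun a b hab => by
    simp only [hΨ]; linarith [hΦ_mono hab]
  have hΨid : ∀ ζ : ℝ, ζ ≤ Ψ ζ := fun ζ => le_trans (hΦ_id ζ) (le_add_of_nonneg_right hΔ)
  have hΨiter : Monotone (fun k : ℕ => Ψ^[k] (z 0)) := by
    refine monotone_nat_of_le_succ (fun k => ?_)
    rw [Function.iterate_succ_apply']
    exact hΨid _
  -- the inductive bound at the left endpoints
  have hbound : ∀ κ, κ ≤ M → z (s κ) ≤ Ψ^[κ + 1] (z 0) := by
    intro κ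
    induction κ with
    | zero =>
      intro _
      have hsub : Set.Ioo (0:ℝ) (s 0) ⊆ Ion := by
        intro x hx
        rw [hIon, hIoff]
        refine ⟨le_of_lt hx.1, ?_⟩
        rintro (h | h)
        · simp only [Set.mem_iUnion, Finset.mem_range] at h
          obtain ⟨j, hj, hx1, _⟩ := h
          exact absurd (lt_of_lt_of_le hx.2 (hsmono j (le_of_lt hj) 0 (Nat.zero_le _)))
            (not_lt.mpr hx1)
        · exact absurd (lt_of_lt_of_le hx.2 (hsmono M le_rfl 0 (Nat.zero_le _)))
            (not_lt.mpr h)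
      have := hkey 0 (s 0) le_rfl hs0 hsub
      calc z (s 0) ≤ z 0 + Δ := this
        _ ≤ Φ (z 0) + Δ := by linarith [hΦ_id (z 0)]
        _ = Ψ^[1] (z 0) := by rw [Function.iterate_one]
    | succ κ ih =>
      intro hκM
      have hκM' : κ < M := hκM
      have htκ0 : 0 ≤ t κ := (hs_nonneg κ (le_of_lt hκM')).trans (hst κ hκM')
      have hsub : Set.Ioo (t κ) (s (κ + 1)) ⊆ Ion := by
        intro x hx
        rw [hIon, hIoff]
        refine ⟨htκ0.trans (le_of_lt hx.1), ?_⟩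
        rintro (h | h)
        · simp only [Set.mem_iUnion, Finset.mem_range] at h
          obtain ⟨j, hj, hx1, hx2⟩ := h
          rcases Nat.lt_or_ge j (κ + 1) with hjκ | hjκ
          · exact absurd (lt_of_le_of_lt (htmono j κ (by omega) hκM') hx.1) (not_lt.mpr hx2)
          · exact absurd (lt_of_lt_of_le hx.2 (hsmono j (le_of_lt hj) (κ+1) hjκ))
              (not_lt.mpr hx1)
        · exact absurd (lt_of_lt_of_le hx.2 (hsmono M le_rfl (κ+1) hκM)) (not_lt.mpr h)
      have h1 : z (s (κ + 1)) ≤ z (t κ) + Δ := hkey (t κ) (s (κ + 1)) htκ0 (hts κ hκM') hsub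
      have h2 : z (t κ) ≤ Φ (z (s κ)) :=
        hoff₁ κ hκM' (t κ) ⟨hst κ hκM', le_refl _⟩
      have h3 : Φ (z (s κ)) ≤ Φ (Ψ^[κ + 1] (z 0)) := hΦ_mono (ih (by omega))
      calc z (s (κ + 1)) ≤ Φ (Ψ^[κ + 1] (z 0)) + Δ := by linarith
        _ = Ψ^[κ + 2] (z 0) := by
            conv_rhs => rw [show κ + 2 = (κ + 1) + 1 from rfl, Function.iterate_succ_apply']
  have hfinal : z (s M) ≤ Ψ^[N + 1] (z 0) :=
    (hbound M le_rfl).trans (hΨiter (by omega : M + 1 ≤ N + 1))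
  intro a ha
  rcases le_or_gt (s M) a with h | h
  · calc z a ≤ Φ (z (s M)) := hoff₂ a h
      _ ≤ Φ (Ψ^[N + 1] (z 0)) := hΦ_mono hfinal
  · calc z a ≤ z (s M) := hz_mono ha (hs_nonneg M le_rfl) (le_of_lt h)
      _ ≤ Ψ^[N + 1] (z 0) := hfinal
      _ ≤ Φ (Ψ^[N + 1] (z 0)) := hΦ_id _
end
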